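/- (Periodicity of feasible (FTP, FSP) schedules) For any preemptive hierarchical (FTP, FSP) scheduler A, if an asynchronous constrained-deadline parallel task system τ = {τ_1 > ... > τ_n} with constant execution times is A-feasible on m unit-capacity processors, then the A-schedule is periodic with period P = lcm(T_1,...,T_n) starting from S_n, where S_1 = O_1 and S_i = max{O_i, O_i + ⌈(S_{i-1} − O_i)/T_i⌉·T_i}. -/
import Mathlib


namespace HierPer

/-- `S_1 = O_1`, `S_{i+1} = max (O_{i+1}) (O_{i+1} + ⌈(S_i - O_{i+1})/T_{i+1}⌉·T_{i+1})`
(0-based; `ℕ` truncated subtraction realises the `max`). -/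
def Snat (O T : ℕ → ℕ) : ℕ → ℕ
  | 0 => O 0
  | i + 1 => O (i + 1) + (Snat O T i - O (i + 1) + T (i + 1) - 1) / T (i + 1) * T (i + 1)

/-- A thread: (task index, subprogram index within the task, instance number). -/
abbrev Thread := ℕ × ℕ × ℕ

def work (σ : ℕ → Finset Thread) (th : Thread) (t : ℕ) : ℕ :=
  ((Finset.range t).filter (fun s => th ∈ σ s)).card

def active (n : ℕ) (v : ℕ → ℕ) (O T : ℕ → ℕ) (C : ℕ → ℕ → ℕ)
    (σ : ℕ → Finset Thread) (th : Thread) (t : ℕ) : Prop :=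
  th.1 < n ∧ th.2.1 < v th.1 ∧ O th.1 + th.2.2 * T th.1 ≤ t ∧
    work σ th t < C th.1 th.2.1

/-- Hierarchical (FTP, FSP) priority: first by fixed task priority
(`τ_1 > ⋯ > τ_n`), then by within-task fixed subprogram priority, then by instance. -/
def hierHp (th' th : Thread) : Prop :=
  th'.1 < th.1 ∨ (th'.1 = th.1 ∧ (th'.2.1 < th.2.1 ∨ (th'.2.1 = th.2.1 ∧ th'.2.2 < th.2.2)))

/-- Preemptive hierarchical (FTP, FSP) schedule on `m` unit-capacity processors. -/
def isHierSchedule (n m : ℕ) (v : ℕ → ℕ) (O T : ℕ → ℕ) (C : ℕ → ℕ → ℕ)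
    (σ : ℕ → Finset Thread) : Prop :=
  ∀ t : ℕ,
    (σ t).card ≤ m ∧
    (∀ th ∈ σ t, active n v O T C σ th t) ∧
    (∀ th : Thread, active n v O T C σ th t → th ∉ σ t →
      (σ t).card = m ∧ ∀ th' ∈ σ t, hierHp th' th)

/-- No thread ever misses its deadline. -/
def feasible (n : ℕ) (v : ℕ → ℕ) (O T D : ℕ → ℕ) (C : ℕ → ℕ → ℕ)
    (σ : ℕ → Finset Thread) : Prop :=
  ∀ th : Thread, th.1 < n → th.2.1 < v th.1 →
    work σ th (O th.1 + th.2.2 * T th.1 + D th.1) = C th.1 th.2.1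

/-! ### Auxiliary lemmas -/

lemma ceil_mul_ge (d T : ℕ) (hT : 0 < T) : d ≤ (d + T - 1) / T * T := by
  rcases Nat.eq_zero_or_pos d with rfl | hd
  · simp
  · have h1 : d + T - 1 = (d - 1) + T := by omega
    rw [h1, Nat.add_div_right _ hT]
    have := (Nat.div_lt_iff_lt_mul hT).mp (lt_add_one ((d - 1) / T))
    omega

lemma Snat_exists_mul (O T : ℕ → ℕ) : ∀ i, ∃ q, Snat O T i = O i + q * T i
  | 0 => ⟨0, by simp [Snat]⟩
  | i + 1 => ⟨_, rfl⟩

lemma Snat_le_succ (O T : ℕ → ℕ) (i : ℕ) (hT : 0 < T (i + 1)) :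
    Snat O T i ≤ Snat O T (i + 1) := by
  have h := ceil_mul_ge (Snat O T i - O (i + 1)) (T (i + 1)) hT
  show Snat O T i ≤ O (i + 1) + (Snat O T i - O (i + 1) + T (i + 1) - 1) / T (i + 1) * T (i + 1)
  omega

lemma Snat_mono (O T : ℕ → ℕ) : ∀ {j i : ℕ}, j ≤ i → (∀ l, l ≤ i → 0 < T l) →
    Snat O T j ≤ Snat O T i := by
  intro j i
  induction i with
  | zero =>
      intro h _
      have hj : j = 0 := by omega
      rw [hj]
  | succ i ih =>
      intro h hT
      rcases Nat.lt_or_ge j (i + 1) with h' | h'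
      · exact le_trans (ih (by omega) (fun l hl => hT l (by omega)))
          (Snat_le_succ O T i (hT (i + 1) le_rfl))
      · have : j = i + 1 := by omega
        subst this; exact le_rfl

lemma work_succ (σ : ℕ → Finset Thread) (th : Thread) (t : ℕ) :
    work σ th (t + 1) = work σ th t + if th ∈ σ t then 1 else 0 := by
  unfold work
  rw [Finset.range_add_one, Finset.filter_insert]
  split
  · rw [Finset.card_insert_of_notMem (by simp)]
  · simp

lemma work_mono (σ : ℕ → Finset Thread) (th : Thread) {s t : ℕ} (h : s ≤ t) :
    work σ th s ≤ work σ th t :=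
  Finset.card_le_card (Finset.filter_subset_filter _ (Finset.range_subset_range.mpr h))

lemma work_eq_zero (σ : ℕ → Finset Thread) (th : Thread) (t : ℕ)
    (h : ∀ s < t, th ∉ σ s) : work σ th t = 0 := by
  unfold work
  rw [Finset.card_eq_zero, Finset.filter_eq_empty_iff]
  intro s hs
  exact h s (Finset.mem_range.mp hs)

lemma work_transfer (σ : ℕ → Finset Thread) (th th' : Thread) (P : ℕ)
    (h0 : ∀ s < P, th' ∉ σ s) :
    ∀ t, (∀ s < t, (th ∈ σ s ↔ th' ∈ σ (s + P))) → work σ th' (t + P) = work σ th t := by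
  intro t
  induction t with
  | zero =>
      intro _
      rw [Nat.zero_add, work_eq_zero σ th' P h0]
      simp [work]
  | succ t ih =>
      intro h
      have h1 : t + 1 + P = (t + P) + 1 := by omega
      rw [h1, work_succ, work_succ, ih (fun s hs => h s (by omega))]
      have hiff := h t (by omega)
      by_cases hm : th ∈ σ t
      · rw [if_pos hm, if_pos (hiff.mp hm)]
      · rw [if_neg hm, if_neg (fun hc => hm (hiff.mpr hc))]

/-! ### Uniqueness of valid schedules -/

def validAt (m : ℕ) (act : Thread → Prop) (A : Finset Thread) : Prop :=
  A.card ≤ m ∧ (∀ th ∈ A, act th) ∧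
    ∀ th, act th → th ∉ A → A.card = m ∧ ∀ th' ∈ A, hierHp th' th

lemma hierHp_asymm {a b : Thread} (h : hierHp a b) (h' : hierHp b a) : False := by
  unfold hierHp at h h'
  omega

lemma valid_subset {m : ℕ} {act : Thread → Prop} {A B : Finset Thread}
    (hA : validAt m act A) (hB : validAt m act B) : A ⊆ B := by
  intro th hth
  by_contra hnb
  have hact := hA.2.1 th hth
  obtain ⟨hcard, hhp⟩ := hB.2.2 th hact hnb
  have hAm := hA.1
  have hBA : B ⊆ A := by
    intro u hu
    by_contra hua
    obtain ⟨hcA, hhpA⟩ := hA.2.2 u (hB.2.1 u hu) hua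
    exact hierHp_asymm (hhp u hu) (hhpA th hth)
  have hAB : B = A := Finset.eq_of_subset_of_card_le hBA (by omega)
  rw [← hAB] at hth
  exact hnb hth

lemma valid_unique {m : ℕ} {act : Thread → Prop} {A B : Finset Thread}
    (hA : validAt m act A) (hB : validAt m act B) : A = B :=
  Finset.Subset.antisymm (valid_subset hA hB) (valid_subset hB hA)

lemma filtered_valid (n m : ℕ) (v : ℕ → ℕ) (O T : ℕ → ℕ) (C : ℕ → ℕ → ℕ)
    (σ : ℕ → Finset Thread) (hσ : isHierSchedule n m v O T C σ) (t i : ℕ) :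
    validAt m (fun th => active n v O T C σ th t ∧ th.1 ≤ i)
      ((σ t).filter (fun th => th.1 ≤ i)) := by
  refine ⟨le_trans (Finset.card_le_card (Finset.filter_subset _ _)) (hσ t).1, ?_, ?_⟩
  · intro th h
    rw [Finset.mem_filter] at h
    exact ⟨(hσ t).2.1 th h.1, h.2⟩
  · rintro th ⟨hact, hle⟩ hnm
    have hnm' : th ∉ σ t := fun h => hnm (Finset.mem_filter.mpr ⟨h, hle⟩)
    obtain ⟨hc, hhp⟩ := (hσ t).2.2 th hact hnm'
    have hfe : (σ t).filter (fun th => th.1 ≤ i) = σ t := by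
      rw [Finset.filter_eq_self]
      intro a ha
      have := hhp a ha
      unfold hierHp at this
      omega
    rw [hfe]
    exact ⟨hc, hhp⟩

/-! ### The shift map -/

def shift (P : ℕ) (T : ℕ → ℕ) (th : Thread) : Thread := (th.1, th.2.1, th.2.2 + P / T th.1)

@[simp] lemma shift_fst (P : ℕ) (T : ℕ → ℕ) (th : Thread) : (shift P T th).1 = th.1 := rfl
@[simp] lemma shift_snd_fst (P : ℕ) (T : ℕ → ℕ) (th : Thread) : (shift P T th).2.1 = th.2.1 := rfl
@[simp] lemma shift_snd_snd (P : ℕ) (T : ℕ → ℕ) (th : Thread) :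
    (shift P T th).2.2 = th.2.2 + P / T th.1 := rfl

lemma shift_injective (P : ℕ) (T : ℕ → ℕ) : Function.Injective (shift P T) := by
  rintro ⟨a1, a2, a3⟩ ⟨b1, b2, b3⟩ h
  simp only [shift, Prod.mk.injEq] at h
  obtain ⟨h1, h2, h3⟩ := h
  subst h1; subst h2
  have : a3 = b3 := by omega
  rw [this]

lemma hierHp_shift {P : ℕ} {T : ℕ → ℕ} {a b : Thread} (h : hierHp a b) :
    hierHp (shift P T a) (shift P T b) := by
  unfold hierHp at h ⊢
  simp only [shift_fst, shift_snd_fst, shift_snd_snd]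
  rcases h with h | ⟨h1, h⟩
  · exact Or.inl h
  · refine Or.inr ⟨h1, ?_⟩
    rcases h with h | ⟨h2, h3⟩
    · exact Or.inl h
    · refine Or.inr ⟨h2, ?_⟩
      rw [h1]
      omega

/-! ### The master periodicity lemma -/

lemma master
    (n m : ℕ) (v O T D : ℕ → ℕ) (C : ℕ → ℕ → ℕ)
    (hT : ∀ i < n, 0 < T i) (hD : ∀ i < n, D i ≤ T i)
    (σ : ℕ → Finset Thread) (hσ : isHierSchedule n m v O T C σ)
    (hfeas : feasible n v O T D C σ)
    (P : ℕ) (hdvd : ∀ i < n, T i ∣ P) :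
    ∀ t : ℕ, ∀ i, i < n → Snat O T i ≤ t →
      (σ (t + P)).filter (fun th => th.1 ≤ i)
        = ((σ t).filter (fun th => th.1 ≤ i)).image (shift P T) := by
  have hmemact : ∀ s, ∀ th ∈ σ s, active n v O T C σ th s := fun s => (hσ s).2.1
  have hdead : ∀ th s, active n v O T C σ th s → s < O th.1 + th.2.2 * T th.1 + D th.1 := by
    intro th s hact
    by_contra h
    have hC := hfeas th hact.1 hact.2.1
    have hmono := work_mono σ th (le_of_not_gt h)
    have := hact.2.2.2
    omega
  intro t
  induction t using Nat.strong_induction_on with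
  | _ t IH =>
  intro i hi hSt
  have hTpos : ∀ l, l ≤ i → 0 < T l := fun l hl => hT l (by omega)
  -- membership transfer for threads with good releases
  have memIff : ∀ th : Thread, th.1 < n → Snat O T th.1 ≤ O th.1 + th.2.2 * T th.1 →
      ∀ s, s < t → (th ∈ σ s ↔ shift P T th ∈ σ (s + P)) := by
    intro th hth hrel s hs
    by_cases hrs : O th.1 + th.2.2 * T th.1 ≤ s
    · have hss : Snat O T th.1 ≤ s := le_trans hrel hrs
      have heq := IH s hs th.1 hth hss
      constructor
      · intro hm
        have h1 : th ∈ (σ s).filter (fun a => a.1 ≤ th.1) :=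
          Finset.mem_filter.mpr ⟨hm, le_refl _⟩
        have h2 : shift P T th ∈ ((σ s).filter (fun a => a.1 ≤ th.1)).image (shift P T) :=
          Finset.mem_image_of_mem _ h1
        rw [← heq] at h2
        exact (Finset.mem_filter.mp h2).1
      · intro hm
        have h1 : shift P T th ∈ (σ (s + P)).filter (fun a => a.1 ≤ th.1) :=
          Finset.mem_filter.mpr ⟨hm, by simp⟩
        rw [heq] at h1
        obtain ⟨a, ha, hae⟩ := Finset.mem_image.mp h1
        have := shift_injective P T hae
        rw [← this]
        exact (Finset.mem_filter.mp ha).1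
    · constructor
      · intro hm
        exact absurd (hmemact s th hm).2.2.1 hrs
      · intro hm
        have hrel' := (hmemact (s + P) _ hm).2.2.1
        simp only [shift_fst, shift_snd_fst, shift_snd_snd] at hrel'
        have hPT : P / T th.1 * T th.1 = P := Nat.div_mul_cancel (hdvd th.1 hth)
        rw [Nat.add_mul] at hrel'
        omega
  have workEq : ∀ th : Thread, th.1 < n → Snat O T th.1 ≤ O th.1 + th.2.2 * T th.1 →
      work σ (shift P T th) (t + P) = work σ th t := by
    intro th hth hrel
    refine work_transfer σ th (shift P T th) P ?_ t (memIff th hth hrel)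
    intro s hs hm
    have h1 := (hmemact s _ hm).2.2.1
    simp only [shift_fst, shift_snd_fst, shift_snd_snd] at h1
    have hPT : P / T th.1 * T th.1 = P := Nat.div_mul_cancel (hdvd th.1 hth)
    rw [Nat.add_mul] at h1
    omega
  -- the shifted schedule is a valid schedule at time t + P
  have hB : validAt m (fun th => active n v O T C σ th (t + P) ∧ th.1 ≤ i)
      (((σ t).filter (fun th => th.1 ≤ i)).image (shift P T)) := by
    refine ⟨?_, ?_, ?_⟩
    · rw [Finset.card_image_of_injective _ (shift_injective P T)]
      exact le_trans (Finset.card_le_card (Finset.filter_subset _ _)) (hσ t).1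
    · intro th' hth'
      obtain ⟨th, hthm, rfl⟩ := Finset.mem_image.mp hth'
      rw [Finset.mem_filter] at hthm
      obtain ⟨hmem, hle⟩ := hthm
      have hact := hmemact t th hmem
      have hth1 : th.1 < n := hact.1
      have hPT : P / T th.1 * T th.1 = P := Nat.div_mul_cancel (hdvd th.1 hth1)
      have hddl := hdead th t hact
      obtain ⟨a, ha⟩ := Snat_exists_mul O T th.1
      have hSi' : Snat O T th.1 ≤ t := le_trans (Snat_mono O T hle hTpos) hSt
      have hrel : Snat O T th.1 ≤ O th.1 + th.2.2 * T th.1 := by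
        have hDT := hD th.1 hth1
        have hTp := hT th.1 hth1
        have h2 : a ≤ th.2.2 := by
          by_contra hc
          have h3 : (th.2.2 + 1) * T th.1 ≤ a * T th.1 :=
            mul_le_mul_left (by omega) _
          rw [Nat.add_mul] at h3
          omega
        have h4 : a * T th.1 ≤ th.2.2 * T th.1 := mul_le_mul_left h2 _
        omega
      have hw := workEq th hth1 hrel
      refine ⟨⟨hth1, hact.2.1, ?_, ?_⟩, hle⟩
      · simp only [shift_fst, shift_snd_fst, shift_snd_snd]
        rw [Nat.add_mul]
        have := hact.2.2.1
        omega
      · simp only [shift_fst, shift_snd_fst] at hw ⊢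
        rw [hw]
        exact hact.2.2.2
    · rintro th' ⟨hact', hle'⟩ hnB
      have hth1 : th'.1 < n := hact'.1
      have hTp := hT th'.1 hth1
      have hDT := hD th'.1 hth1
      have hPT : P / T th'.1 * T th'.1 = P := Nat.div_mul_cancel (hdvd th'.1 hth1)
      have hddl := hdead th' (t + P) hact'
      obtain ⟨a, ha⟩ := Snat_exists_mul O T th'.1
      have hSi' : Snat O T th'.1 ≤ t := le_trans (Snat_mono O T hle' hTpos) hSt
      have hk : a + P / T th'.1 ≤ th'.2.2 := by
        by_contra hc
        have h3 : (th'.2.2 + 1) * T th'.1 ≤ (a + P / T th'.1) * T th'.1 :=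
          mul_le_mul_left (by omega) _
        rw [Nat.add_mul, Nat.add_mul] at h3
        omega
      set th : Thread := (th'.1, th'.2.1, th'.2.2 - P / T th'.1) with hthdef
      have hshift : shift P T th = th' := by
        show (th'.1, th'.2.1, th'.2.2 - P / T th'.1 + P / T th'.1) = th'
        have : th'.2.2 - P / T th'.1 + P / T th'.1 = th'.2.2 := by omega
        rw [this]
      have hsubmul : (th'.2.2 - P / T th'.1) * T th'.1 + P = th'.2.2 * T th'.1 := by
        have h5 : P / T th'.1 * T th'.1 ≤ th'.2.2 * T th'.1 := mul_le_mul_left (by omega) _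
        rw [Nat.sub_mul]
        omega
      have hrel : Snat O T th.1 ≤ O th.1 + th.2.2 * T th.1 := by
        show Snat O T th'.1 ≤ O th'.1 + (th'.2.2 - P / T th'.1) * T th'.1
        have h6 : a * T th'.1 ≤ (th'.2.2 - P / T th'.1) * T th'.1 :=
          mul_le_mul_left (by omega) _
        omega
      have hw := workEq th hth1 hrel
      rw [hshift] at hw
      have hactth : active n v O T C σ th t := by
        refine ⟨hth1, hact'.2.1, ?_, ?_⟩
        · show O th'.1 + (th'.2.2 - P / T th'.1) * T th'.1 ≤ t
          have := hact'.2.2.1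
          omega
        · show work σ th t < C th'.1 th'.2.1
          rw [← hw]
          exact hact'.2.2.2
      have hnmem : th ∉ σ t := by
        intro hc
        exact hnB (hshift ▸ Finset.mem_image_of_mem _
          (Finset.mem_filter.mpr ⟨hc, show th'.1 ≤ i from hle'⟩))
      obtain ⟨hcard, hhp⟩ := (hσ t).2.2 th hactth hnmem
      have hfe : (σ t).filter (fun a => a.1 ≤ i) = σ t := by
        rw [Finset.filter_eq_self]
        intro a haσ
        have := hhp a haσ
        unfold hierHp at this
        have : a.1 ≤ th'.1 := by
          simp only [hthdef] at this
          omega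
        omega
      constructor
      · rw [Finset.card_image_of_injective _ (shift_injective P T), hfe, hcard]
      · intro b hb
        obtain ⟨c, hcf, rfl⟩ := Finset.mem_image.mp hb
        have hhpc := hhp c (Finset.mem_filter.mp hcf).1
        rw [← hshift]
        exact hierHp_shift hhpc
  exact valid_unique (filtered_valid n m v O T C σ hσ (t + P) i) hB

/-- **Periodicity of feasible (FTP, FSP) schedules.**  If an asynchronous
constrained-deadline parallel task system `τ = {τ_1 > ⋯ > τ_n}` with constant
execution times is feasible under a preemptive hierarchical (FTP, FSP)
scheduler on `m` unit-capacity processors, then the schedule is periodic with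
period `P = lcm(T_1,…,T_n)` starting from `S_n`. -/
theorem periodicity_of_feasible_hier_schedules
    (n m : ℕ) (hn : 0 < n) (v O T D : ℕ → ℕ) (C : ℕ → ℕ → ℕ)
    (hT : ∀ i < n, 0 < T i) (hD : ∀ i < n, D i ≤ T i)
    (σ : ℕ → Finset Thread)
    (hσ : isHierSchedule n m v O T C σ)
    (hfeas : feasible n v O T D C σ)
    (P : ℕ) (hP : P = (Finset.range n).lcm T) :
    ∀ t : ℕ, Snat O T (n - 1) ≤ t →
      σ (t + P) = (σ t).image (fun th => (th.1, th.2.1, th.2.2 + P / T th.1)) := by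
  intro t ht
  have hdvd : ∀ i < n, T i ∣ P := fun i hi => hP ▸ Finset.dvd_lcm (Finset.mem_range.mpr hi)
  have h := master n m v O T D C hT hD σ hσ hfeas P hdvd t (n - 1) (by omega) ht
  have hfull : ∀ s, (σ s).filter (fun th => th.1 ≤ n - 1) = σ s := by
    intro s
    rw [Finset.filter_eq_self]
    intro a ha
    have := ((hσ s).2.1 a ha).1
    omega
  rw [hfull, hfull] at h
  exact h

end HierPer
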